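/- Under the DCSBM population setup, the K×K matrix D̃P̃D̃ is nonsingular, and a nonzero real number μ is an eigenvalue of 𝓛_δ if and only if μ/‖θ̃‖² is an eigenvalue of D̃P̃D̃; consequently 𝓛_δ has exactly K nonzero eigenvalues (counted with multiplicity) and they are ‖θ̃‖² times the eigenvalues of D̃P̃D̃. -/

import Mathlib

/-!
Writing `c i = θ̃ i / ‖θ̃^{(g i)}‖`, the matrix `Γ̃ = diag(c) Z` has orthonormal columns, and
entrywise `(𝓛_δ)_ij = θ̃_i θ̃_j P̃_{g_i g_j}`, which gives `𝓛_δ = Γ̃ (‖θ̃‖² D̃P̃D̃) Γ̃ᵀ`. For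
`Γ̃ᵀΓ̃ = 1` the characteristic polynomials of `Γ̃ M Γ̃ᵀ` and `M` differ by the factor `X^(n-K)`
(Sylvester's identity), so the nonzero eigenvalues of `𝓛_δ` are those of `‖θ̃‖² D̃P̃D̃`.
-/

open Matrix BigOperators MeasureTheory ProbabilityTheory

noncomputable section

namespace DCSBM

variable {n K : ℕ}

/-- The `n × K` membership matrix `Z` with `Z i k = 1` iff node `i` is in community `k`. -/
def Zmat (g : Fin n → Fin K) : Matrix (Fin n) (Fin K) ℝ :=
  Matrix.of fun i k => if g i = k then (1 : ℝ) else 0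

/-- The population expectation matrix `Ω = Θ Z P Zᵀ Θ`. -/
def Omega (g : Fin n → Fin K) (θ : Fin n → ℝ) (P : Matrix (Fin K) (Fin K) ℝ) :
    Matrix (Fin n) (Fin n) ℝ :=
  Matrix.diagonal θ * Zmat g * P * (Zmat g)ᵀ * Matrix.diagonal θ

/-- Expected degrees `𝒟_ii = ∑_j Ω_ij`. -/
def Dvec (g : Fin n → Fin K) (θ : Fin n → ℝ) (P : Matrix (Fin K) (Fin K) ℝ) : Fin n → ℝ :=
  fun i => ∑ j, Omega g θ P i j

/-- The regularized population Laplacian `𝓛_δ = 𝒟_δ^{-1/2} Ω 𝒟_δ^{-1/2}`. -/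
def Ldelta (g : Fin n → Fin K) (θ : Fin n → ℝ) (P : Matrix (Fin K) (Fin K) ℝ) (δ d : ℝ) :
    Matrix (Fin n) (Fin n) ℝ :=
  Matrix.diagonal (fun i => (Real.sqrt (Dvec g θ P i + δ * d))⁻¹) * Omega g θ P *
    Matrix.diagonal (fun i => (Real.sqrt (Dvec g θ P i + δ * d))⁻¹)

/-- `θ^δ_i = θ_i 𝒟_ii / (𝒟_ii + δ d)`. -/
def thetaDelta (g : Fin n → Fin K) (θ : Fin n → ℝ) (P : Matrix (Fin K) (Fin K) ℝ) (δ d : ℝ) :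
    Fin n → ℝ :=
  fun i => θ i * Dvec g θ P i / (Dvec g θ P i + δ * d)

/-- `θ̃_i = √(θ^δ_i)`. -/
def thetaTilde (g : Fin n → Fin K) (θ : Fin n → ℝ) (P : Matrix (Fin K) (Fin K) ℝ) (δ d : ℝ) :
    Fin n → ℝ :=
  fun i => Real.sqrt (thetaDelta g θ P δ d i)

/-- `θ̃^{(k)}_i = θ̃_i · 1{g i = k}`. -/
def thetaTildeK (g : Fin n → Fin K) (θ : Fin n → ℝ) (P : Matrix (Fin K) (Fin K) ℝ) (δ d : ℝ)
    (k : Fin K) : Fin n → ℝ :=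
  fun i => if g i = k then thetaTilde g θ P δ d i else 0

/-- Euclidean norm of a vector. -/
def normE {m : ℕ} (v : Fin m → ℝ) : ℝ := Real.sqrt (∑ i, v i ^ 2)

/-- Row sums of `Q = P Zᵀ Θ`, the diagonal entries of `D_P`. -/
def DPvec (g : Fin n → Fin K) (θ : Fin n → ℝ) (P : Matrix (Fin K) (Fin K) ℝ) : Fin K → ℝ :=
  fun k => ∑ j, (P * (Zmat g)ᵀ * Matrix.diagonal θ) k j

/-- `P̃ = D_P^{-1/2} P D_P^{-1/2}`. -/
def Ptilde (g : Fin n → Fin K) (θ : Fin n → ℝ) (P : Matrix (Fin K) (Fin K) ℝ) :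
    Matrix (Fin K) (Fin K) ℝ :=
  Matrix.diagonal (fun k => (Real.sqrt (DPvec g θ P k))⁻¹) * P *
    Matrix.diagonal (fun k => (Real.sqrt (DPvec g θ P k))⁻¹)

/-- `D̃ = diag(‖θ̃^{(k)}‖ / ‖θ̃‖)`. -/
def Dtilde (g : Fin n → Fin K) (θ : Fin n → ℝ) (P : Matrix (Fin K) (Fin K) ℝ) (δ d : ℝ) :
    Matrix (Fin K) (Fin K) ℝ :=
  Matrix.diagonal fun k => normE (thetaTildeK g θ P δ d k) / normE (thetaTilde g θ P δ d)

/-- `Γ̃`, the `n × K` matrix whose `k`-th column is `θ̃^{(k)} / ‖θ̃^{(k)}‖`. -/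
def Gamma (g : Fin n → Fin K) (θ : Fin n → ℝ) (P : Matrix (Fin K) (Fin K) ℝ) (δ d : ℝ) :
    Matrix (Fin n) (Fin K) ℝ :=
  Matrix.of fun i k => thetaTildeK g θ P δ d k i / normE (thetaTildeK g θ P δ d k)

end DCSBM

namespace Matrix

variable {m k R : Type*} [Fintype m] [Fintype k]

theorem charpoly_mul_mul_transpose_of_transpose_mul_self [DecidableEq m] [DecidableEq k]
    [CommRing R] (A : Matrix m k R) (B : Matrix k k R) (hA : Aᵀ * A = 1)
    (hle : Fintype.card k ≤ Fintype.card m) :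
    (A * B * Aᵀ).charpoly = Polynomial.X ^ (Fintype.card m - Fintype.card k) * B.charpoly := by
  rw [Matrix.mul_assoc, charpoly_mul_comm_of_le _ _ hle, Matrix.mul_assoc, hA, Matrix.mul_one]

theorem exists_mulVec_eq_smul_iff_eval_charpoly [DecidableEq m] [CommRing R] [IsDomain R]
    (M : Matrix m m R) (μ : R) : (∃ v : m → R, v ≠ 0 ∧ M *ᵥ v = μ • v) ↔ M.charpoly.eval μ = 0 := by
  rw [eval_charpoly, ← exists_mulVec_eq_zero_iff]
  simp only [sub_mulVec, scalar_apply, diagonal_const_mulVec, sub_eq_zero, eq_comm]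

theorem smul_mulVec_eq_smul_iff {𝕜 : Type*} [Field 𝕜] {s : 𝕜} (hs : s ≠ 0) (M : Matrix m m 𝕜)
    (v : m → 𝕜) (μ : 𝕜) : (s • M) *ᵥ v = μ • v ↔ M *ᵥ v = (μ / s) • v := by
  rw [smul_mulVec, div_eq_inv_mul, mul_smul, eq_inv_smul_iff₀ hs]

end Matrix

namespace DCSBM

variable {n K : ℕ}

theorem normE_sq {m : ℕ} (v : Fin m → ℝ) : normE v ^ 2 = ∑ i, v i ^ 2 :=
  Real.sq_sqrt (Finset.sum_nonneg fun _ _ => sq_nonneg _)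

theorem normE_pos_of_ne_zero {m : ℕ} {v : Fin m → ℝ} (i : Fin m) (hi : v i ≠ 0) :
    0 < normE v :=
  Real.sqrt_pos.2 <| Finset.sum_pos' (fun _ _ => sq_nonneg _)
    ⟨i, Finset.mem_univ _, pow_two_pos_of_ne_zero hi⟩

theorem diagonal_mul_Zmat_conj_apply (g : Fin n → Fin K) (c : Fin n → ℝ)
    (X : Matrix (Fin K) (Fin K) ℝ) (i j : Fin n) :
    (diagonal c * Zmat g * X * (Zmat g)ᵀ * diagonal c) i j = c i * c j * X (g i) (g j) := by
  have hZ : (Zmat g * X * (Zmat g)ᵀ) i j = X (g i) (g j) := by simp [Matrix.mul_apply, Zmat]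
  rw [Matrix.mul_assoc (diagonal c), Matrix.mul_assoc (diagonal c), mul_diagonal,
    diagonal_mul, hZ]
  ring

variable {g : Fin n → Fin K} {θ : Fin n → ℝ} {P : Matrix (Fin K) (Fin K) ℝ} {δ d : ℝ}

theorem Omega_apply (i j : Fin n) : Omega g θ P i j = θ i * θ j * P (g i) (g j) :=
  diagonal_mul_Zmat_conj_apply g θ P i j

theorem DPvec_apply (k : Fin K) : DPvec g θ P k = ∑ j, P k (g j) * θ j := by
  simp only [DPvec, mul_diagonal]
  simp [Matrix.mul_apply, Zmat]

theorem Dvec_eq (i : Fin n) : Dvec g θ P i = θ i * DPvec g θ P (g i) := by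
  simp only [Dvec, Omega_apply, DPvec_apply, Finset.mul_sum]
  exact Finset.sum_congr rfl fun j _ => by ring

theorem DPvec_pos (hg : Function.Surjective g) (hθ : ∀ i, 0 < θ i) (hPdet : P.det ≠ 0)
    (hPnn : ∀ k l, 0 ≤ P k l) (k : Fin K) : 0 < DPvec g θ P k := by
  obtain ⟨l, hl⟩ : ∃ l, P k l ≠ 0 := by
    by_contra! h
    exact hPdet (det_eq_zero_of_row_eq_zero k h)
  obtain ⟨j, rfl⟩ := hg l
  rw [DPvec_apply]
  exact Finset.sum_pos' (fun i _ => mul_nonneg (hPnn _ _) (hθ i).le)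
    ⟨j, Finset.mem_univ _, mul_pos ((hPnn _ _).lt_of_ne' hl) (hθ j)⟩

theorem thetaTilde_pos (hθ : ∀ i, 0 < θ i) (hDP : ∀ k, 0 < DPvec g θ P k) (hδ : 0 < δ)
    (hd : 0 < d) (i : Fin n) : 0 < thetaTilde g θ P δ d i := by
  have hD : 0 < Dvec g θ P i := by rw [Dvec_eq]; exact mul_pos (hθ i) (hDP _)
  have := hθ i
  exact Real.sqrt_pos.2 (by unfold thetaDelta; positivity)

theorem thetaTilde_eq (hθ : ∀ i, 0 ≤ θ i) (hDP : ∀ k, 0 ≤ DPvec g θ P k) (i : Fin n) :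
    thetaTilde g θ P δ d i
      = θ i * √(DPvec g θ P (g i)) / √(Dvec g θ P i + δ * d) := by
  have : thetaDelta g θ P δ d i = θ i ^ 2 * DPvec g θ P (g i) / (Dvec g θ P i + δ * d) := by
    rw [thetaDelta, Dvec_eq]; ring
  rw [thetaTilde, this, Real.sqrt_div (mul_nonneg (sq_nonneg _) (hDP _)),
    Real.sqrt_mul (sq_nonneg _), Real.sqrt_sq (hθ i)]

theorem Ptilde_apply (k l : Fin K) :
    Ptilde g θ P k l = (√(DPvec g θ P k))⁻¹ * P k l * (√(DPvec g θ P l))⁻¹ := by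
  rw [Ptilde, mul_diagonal, diagonal_mul]

theorem Ldelta_apply (hθ : ∀ i, 0 ≤ θ i) (hDP : ∀ k, 0 < DPvec g θ P k) (i j : Fin n) :
    Ldelta g θ P δ d i j
      = thetaTilde g θ P δ d i * thetaTilde g θ P δ d j * Ptilde g θ P (g i) (g j) := by
  have hsqrt (k : Fin K) : √(DPvec g θ P k) ≠ 0 := (Real.sqrt_pos.2 (hDP k)).ne'
  rw [Ldelta, mul_diagonal, diagonal_mul, Omega_apply, Ptilde_apply,
    thetaTilde_eq hθ (fun k => (hDP k).le), thetaTilde_eq hθ (fun k => (hDP k).le)]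
  field_simp [hsqrt]

theorem Gamma_eq :
    Gamma g θ P δ d =
      diagonal (fun i => thetaTilde g θ P δ d i / normE (thetaTildeK g θ P δ d (g i))) *
        Zmat g := by
  ext i k
  by_cases h : g i = k
  · subst h; simp [Gamma, thetaTildeK, Zmat, diagonal_mul]
  · simp [Gamma, thetaTildeK, Zmat, diagonal_mul, h]

theorem transpose_Gamma_mul_Gamma (hN : ∀ k, normE (thetaTildeK g θ P δ d k) ≠ 0) :
    (Gamma g θ P δ d)ᵀ * Gamma g θ P δ d = 1 := by
  ext k l
  simp only [Matrix.mul_apply, transpose_apply, Gamma, of_apply, div_mul_div_comm]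
  by_cases hkl : k = l
  · subst hkl
    rw [← Finset.sum_div, one_apply_eq]
    simp_rw [← sq]
    rw [← normE_sq, div_self (pow_ne_zero 2 (hN k))]
  · have hdisj (i : Fin n) : thetaTildeK g θ P δ d k i * thetaTildeK g θ P δ d l i = 0 := by
      unfold thetaTildeK; split_ifs with h1 h2 <;> simp_all
    simp [hdisj, one_apply_ne hkl]

theorem Gamma_mul_mul_transpose_apply (X : Matrix (Fin K) (Fin K) ℝ) (i j : Fin n) :
    (Gamma g θ P δ d * X * (Gamma g θ P δ d)ᵀ) i j
      = thetaTilde g θ P δ d i / normE (thetaTildeK g θ P δ d (g i)) *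
        (thetaTilde g θ P δ d j / normE (thetaTildeK g θ P δ d (g j))) * X (g i) (g j) := by
  rw [Gamma_eq, transpose_mul, diagonal_transpose, ← Matrix.mul_assoc,
    diagonal_mul_Zmat_conj_apply]

theorem Ldelta_eq_Gamma_mul_mul_transpose (hθ : ∀ i, 0 ≤ θ i) (hDP : ∀ k, 0 < DPvec g θ P k)
    (hN : ∀ k, normE (thetaTildeK g θ P δ d k) ≠ 0) (hN₀ : normE (thetaTilde g θ P δ d) ≠ 0) :
    Ldelta g θ P δ d = Gamma g θ P δ d *
      (normE (thetaTilde g θ P δ d) ^ 2 •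
        (Dtilde g θ P δ d * Ptilde g θ P * Dtilde g θ P δ d)) * (Gamma g θ P δ d)ᵀ := by
  ext i j
  rw [Ldelta_apply hθ hDP, Gamma_mul_mul_transpose_apply, Matrix.smul_apply, Dtilde, mul_diagonal,
    diagonal_mul, smul_eq_mul]
  field_simp [hN, hN₀]

theorem det_Dtilde_Ptilde_Dtilde_ne_zero (hPdet : P.det ≠ 0) (hDP : ∀ k, 0 < DPvec g θ P k)
    (hN : ∀ k, normE (thetaTildeK g θ P δ d k) ≠ 0) (hN₀ : normE (thetaTilde g θ P δ d) ≠ 0) :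
    (Dtilde g θ P δ d * Ptilde g θ P * Dtilde g θ P δ d).det ≠ 0 := by
  have hsqrt (k : Fin K) : √(DPvec g θ P k) ≠ 0 := (Real.sqrt_pos.2 (hDP k)).ne'
  simp [Dtilde, Ptilde, det_mul, det_diagonal, Finset.prod_ne_zero_iff, hPdet, hsqrt, hN, hN₀]

theorem stmt5_general {n K : ℕ} (hK : 1 ≤ K) (hKn : K ≤ n)
    (g : Fin n → Fin K) (hg : Function.Surjective g)
    (θ : Fin n → ℝ) (hθ : ∀ i, 0 < θ i)
    (P : Matrix (Fin K) (Fin K) ℝ) (hPdet : P.det ≠ 0)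
    (hPnn : ∀ k l, 0 ≤ P k l)
    (δ d : ℝ) (hδ : 0 < δ) (hd : 0 < d) :
    (Dtilde g θ P δ d * Ptilde g θ P * Dtilde g θ P δ d).det ≠ 0 ∧
      (∀ μ : ℝ, μ ≠ 0 →
        ((∃ v : Fin n → ℝ, v ≠ 0 ∧ Ldelta g θ P δ d *ᵥ v = μ • v) ↔
          (∃ w : Fin K → ℝ, w ≠ 0 ∧
            (Dtilde g θ P δ d * Ptilde g θ P * Dtilde g θ P δ d) *ᵥ w =
              (μ / (normE (thetaTilde g θ P δ d)) ^ 2) • w))) ∧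
      (Ldelta g θ P δ d).charpoly =
        Polynomial.X ^ (n - K) *
          ((normE (thetaTilde g θ P δ d)) ^ 2 •
            (Dtilde g θ P δ d * Ptilde g θ P * Dtilde g θ P δ d)).charpoly := by
  have hDP := DPvec_pos hg hθ hPdet hPnn
  have hθtilde := thetaTilde_pos hθ hDP hδ hd
  have hN (k : Fin K) : normE (thetaTildeK g θ P δ d k) ≠ 0 := by
    obtain ⟨i, hi⟩ := hg k
    exact (normE_pos_of_ne_zero i (by simpa [thetaTildeK, hi] using (hθtilde i).ne')).ne'
  have hN₀ : normE (thetaTilde g θ P δ d) ≠ 0 := by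
    obtain ⟨i, -⟩ := hg ⟨0, hK⟩
    exact (normE_pos_of_ne_zero i (hθtilde i).ne').ne'
  have hchar : (Ldelta g θ P δ d).charpoly = Polynomial.X ^ (n - K) *
      (normE (thetaTilde g θ P δ d) ^ 2 •
        (Dtilde g θ P δ d * Ptilde g θ P * Dtilde g θ P δ d)).charpoly := by
    rw [Ldelta_eq_Gamma_mul_mul_transpose (fun i => (hθ i).le) hDP hN hN₀,
      charpoly_mul_mul_transpose_of_transpose_mul_self _ _ (transpose_Gamma_mul_Gamma hN)
        (by rwa [Fintype.card_fin, Fintype.card_fin]),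
      Fintype.card_fin, Fintype.card_fin]
  refine ⟨det_Dtilde_Ptilde_Dtilde_ne_zero hPdet hDP hN hN₀, fun μ hμ => ?_, hchar⟩
  rw [exists_mulVec_eq_smul_iff_eval_charpoly, hchar, Polynomial.eval_mul, Polynomial.eval_pow,
    Polynomial.eval_X, mul_eq_zero, or_iff_right (pow_ne_zero _ hμ),
    ← exists_mulVec_eq_smul_iff_eval_charpoly]
  simp_rw [smul_mulVec_eq_smul_iff (pow_ne_zero 2 hN₀)]

/-- `D̃P̃D̃` is nonsingular; a nonzero `μ` is an eigenvalue of `𝓛_δ` iff `μ/‖θ̃‖²` is an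
eigenvalue of `D̃P̃D̃`; and `𝓛_δ` has exactly `K` nonzero eigenvalues counted with
multiplicity, namely `‖θ̃‖²` times the eigenvalues of `D̃P̃D̃` (expressed via the
characteristic polynomial). -/
theorem stmt5 {n K : ℕ} (hK : 1 ≤ K) (hKn : K ≤ n)
    (g : Fin n → Fin K) (hg : Function.Surjective g)
    (θ : Fin n → ℝ) (hθ : ∀ i, 0 < θ i)
    (P : Matrix (Fin K) (Fin K) ℝ) (hPsymm : P.IsSymm) (hPdet : P.det ≠ 0)
    (hPnn : ∀ k l, 0 ≤ P k l)
    (δ d : ℝ) (hδ : 0 < δ) (hd : 0 < d) :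
    (Dtilde g θ P δ d * Ptilde g θ P * Dtilde g θ P δ d).det ≠ 0 ∧
      (∀ μ : ℝ, μ ≠ 0 →
        ((∃ v : Fin n → ℝ, v ≠ 0 ∧ Ldelta g θ P δ d *ᵥ v = μ • v) ↔
          (∃ w : Fin K → ℝ, w ≠ 0 ∧
            (Dtilde g θ P δ d * Ptilde g θ P * Dtilde g θ P δ d) *ᵥ w =
              (μ / (normE (thetaTilde g θ P δ d)) ^ 2) • w))) ∧
      (Ldelta g θ P δ d).charpoly =
        Polynomial.X ^ (n - K) *
          ((normE (thetaTilde g θ P δ d)) ^ 2 •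
            (Dtilde g θ P δ d * Ptilde g θ P * Dtilde g θ P δ d)).charpoly :=
  stmt5_general hK hKn g hg θ hθ P hPdet hPnn δ d hδ hd

end DCSBM
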